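/- Let Γ_1 and Γ_2 be graphs with maximum degrees Δ_1 and Δ_2 respectively. If S_1 is an offensive k_1-alliance in Γ_1 and S_2 is an offensive k_2-alliance in Γ_2, then S_1 × S_2 is an offensive k-alliance in the Cartesian product Γ_1 × Γ_2 for k = min{k_2 - Δ_1, k_1 - Δ_2}. -/

import Mathlib

open Finset

variable {V V₁ V₂ : Type*}

/-- Number of neighbors of `v` lying in `S`. -/
def degOn [Fintype V] [DecidableEq V] (G : SimpleGraph V) [DecidableRel G.Adj]
    (S : Finset V) (v : V) : ℕ :=
  (G.neighborFinset v ∩ S).card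

/-- `S` is a dominating set of `G`. -/
def IsDominating [Fintype V] (G : SimpleGraph V) (S : Finset V) : Prop :=
  ∀ v ∉ S, ∃ u ∈ S, G.Adj u v

/-- `S` is a global offensive `k`-alliance in `G`. -/
def IsGOA [Fintype V] [DecidableEq V] (G : SimpleGraph V) [DecidableRel G.Adj]
    (k : ℤ) (S : Finset V) : Prop :=
  IsDominating G S ∧ ∀ v ∉ S, (degOn G Sᶜ v : ℤ) + k ≤ (degOn G S v : ℤ)

/-- `S` is an offensive `k`-alliance in `G`: it is nonempty and every boundary
vertex has at least `k` more neighbors inside `S` than outside. -/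
def IsOA [Fintype V] [DecidableEq V] (G : SimpleGraph V) [DecidableRel G.Adj]
    (k : ℤ) (S : Finset V) : Prop :=
  S.Nonempty ∧ ∀ v ∉ S, (∃ u ∈ S, G.Adj u v) →
    (degOn G Sᶜ v : ℤ) + k ≤ (degOn G S v : ℤ)

/-- `S` is an `r`-dependent set in `G`. -/
def IsDependent [Fintype V] [DecidableEq V] (G : SimpleGraph V) [DecidableRel G.Adj]
    (r : ℕ) (S : Finset V) : Prop :=
  ∀ v ∈ S, degOn G S v ≤ r

/-- `S` is a `τ`-dominating set in `G`. -/
def IsTauDominating [Fintype V] [DecidableEq V] (G : SimpleGraph V) [DecidableRel G.Adj]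
    (τ : ℝ) (S : Finset V) : Prop :=
  ∀ v ∉ S, τ * (G.degree v : ℝ) ≤ (degOn G S v : ℝ)

/-- The global offensive `k`-alliance number of `G`. -/
noncomputable def goaNum [Fintype V] [DecidableEq V] (G : SimpleGraph V)
    [DecidableRel G.Adj] (k : ℤ) : ℕ :=
  sInf {t | ∃ S : Finset V, IsGOA G k S ∧ S.card = t}

/-- The maximum cardinality of an `r`-dependent set in `G`. -/
noncomputable def depNum [Fintype V] [DecidableEq V] (G : SimpleGraph V)
    [DecidableRel G.Adj] (r : ℕ) : ℕ :=
  sSup {t | ∃ S : Finset V, IsDependent G r S ∧ S.card = t}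

/-!
A boundary vertex `(v₁, v₂)` of `S₁ × S₂` is joined to `S₁ × S₂` along an edge of one factor, say
of `Γ₁`. Then `v₂ ∈ S₂` and `v₁` is a boundary vertex of `S₁`; the neighbours of `(v₁, v₂)` in
`S₁ × S₂` are exactly those of `v₁` in `S₁`, while its outside neighbours are those of `v₁` outside
`S₁` together with at most `Δ₂` neighbours in the `Γ₂`-direction. So the excess `k₁` at `v₁`
drops to at least `k₁ - Δ₂` at `(v₁, v₂)`.
-/

section

variable [Fintype V] [DecidableEq V] [Fintype V₁] [DecidableEq V₁] [Fintype V₂] [DecidableEq V₂]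

lemma degOn_add_degOn_compl (G : SimpleGraph V) [DecidableRel G.Adj] (S : Finset V) (v : V) :
    degOn G S v + degOn G Sᶜ v = G.degree v := by
  rw [degOn, degOn, ← sdiff_eq_inter_compl, card_inter_add_card_sdiff,
    SimpleGraph.card_neighborFinset_eq_degree]

variable (G₁ : SimpleGraph V₁) (G₂ : SimpleGraph V₂)
  [DecidableRel G₁.Adj] [DecidableRel G₂.Adj] [DecidableRel (G₁ □ G₂).Adj]
  (S₁ : Finset V₁) (S₂ : Finset V₂)

lemma degOn_boxProd_product (v : V₁ × V₂) :
    degOn (G₁ □ G₂) (S₁ ×ˢ S₂) v =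
      (if v.2 ∈ S₂ then degOn G₁ S₁ v.1 else 0) + (if v.1 ∈ S₁ then degOn G₂ S₂ v.2 else 0) := by
  rw [degOn, SimpleGraph.neighborFinset_boxProd, disjUnion_eq_union, union_inter_distrib_right,
    card_union_of_disjoint, product_inter_product, product_inter_product, card_product,
    card_product, degOn, degOn]
  · congr 1
    · by_cases h : v.2 ∈ S₂ <;> simp [h]
    · by_cases h : v.1 ∈ S₁ <;> simp [h]
  · exact (disjoint_product.mpr <| .inl <| SimpleGraph.neighborFinset_disjoint_singleton _ _).mono
      inter_subset_left inter_subset_left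

lemma degOn_compl_boxProd_product_add_le_of_mem_right {k : ℤ} {v₁ : V₁} {v₂ : V₂}
    (hv₁ : v₁ ∉ S₁) (hv₂ : v₂ ∈ S₂) (h : (degOn G₁ S₁ᶜ v₁ : ℤ) + k ≤ degOn G₁ S₁ v₁) :
    (degOn (G₁ □ G₂) (S₁ ×ˢ S₂)ᶜ (v₁, v₂) : ℤ) + (k - G₂.maxDegree) ≤
      degOn (G₁ □ G₂) (S₁ ×ˢ S₂) (v₁, v₂) := by
  have hsplit := degOn_add_degOn_compl (G₁ □ G₂) (S₁ ×ˢ S₂) (v₁, v₂)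
  have hsplit₁ := degOn_add_degOn_compl G₁ S₁ v₁
  have hΔ₂ := G₂.degree_le_maxDegree v₂
  rw [SimpleGraph.degree_boxProd, degOn_boxProd_product, if_pos hv₂, if_neg hv₁] at hsplit
  rw [degOn_boxProd_product, if_pos hv₂, if_neg hv₁]
  simp only [add_zero] at hsplit ⊢
  omega

lemma degOn_compl_boxProd_product_add_le_of_mem_left {k : ℤ} {v₁ : V₁} {v₂ : V₂}
    (hv₁ : v₁ ∈ S₁) (hv₂ : v₂ ∉ S₂) (h : (degOn G₂ S₂ᶜ v₂ : ℤ) + k ≤ degOn G₂ S₂ v₂) :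
    (degOn (G₁ □ G₂) (S₁ ×ˢ S₂)ᶜ (v₁, v₂) : ℤ) + (k - G₁.maxDegree) ≤
      degOn (G₁ □ G₂) (S₁ ×ˢ S₂) (v₁, v₂) := by
  have hsplit := degOn_add_degOn_compl (G₁ □ G₂) (S₁ ×ˢ S₂) (v₁, v₂)
  have hsplit₂ := degOn_add_degOn_compl G₂ S₂ v₂
  have hΔ₁ := G₁.degree_le_maxDegree v₁
  rw [SimpleGraph.degree_boxProd, degOn_boxProd_product, if_neg hv₂, if_pos hv₁] at hsplit
  rw [degOn_boxProd_product, if_neg hv₂, if_pos hv₁]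
  simp only [zero_add] at hsplit ⊢
  omega

end

theorem stmt_14 [Fintype V₁] [DecidableEq V₁] [Fintype V₂] [DecidableEq V₂]
    (G₁ : SimpleGraph V₁) (G₂ : SimpleGraph V₂)
    [DecidableRel G₁.Adj] [DecidableRel G₂.Adj] [DecidableRel (G₁ □ G₂).Adj]
    (k₁ k₂ : ℤ) (S₁ : Finset V₁) (S₂ : Finset V₂)
    (h₁ : IsOA G₁ k₁ S₁) (h₂ : IsOA G₂ k₂ S₂) :
    IsOA (G₁ □ G₂) (min (k₂ - (G₁.maxDegree : ℤ)) (k₁ - (G₂.maxDegree : ℤ)))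
      (S₁ ×ˢ S₂) := by
  refine ⟨h₁.1.product h₂.1, ?_⟩
  rintro ⟨v₁, v₂⟩ hv ⟨⟨u₁, u₂⟩, hu, hadj⟩
  rw [mem_product] at hu hv
  rcases hadj with ⟨hadj₁, rfl⟩ | ⟨hadj₂, rfl⟩
  · have hv₁ : v₁ ∉ S₁ := fun h ↦ hv ⟨h, hu.2⟩
    exact le_trans (by gcongr; exact min_le_right _ _) <|
      degOn_compl_boxProd_product_add_le_of_mem_right G₁ G₂ S₁ S₂ hv₁ hu.2
        (h₁.2 v₁ hv₁ ⟨u₁, hu.1, hadj₁⟩)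
  · have hv₂ : v₂ ∉ S₂ := fun h ↦ hv ⟨hu.1, h⟩
    exact le_trans (by gcongr; exact min_le_left _ _) <|
      degOn_compl_boxProd_product_add_le_of_mem_left G₁ G₂ S₁ S₂ hu.1 hv₂
        (h₂.2 v₂ hv₂ ⟨u₂, hu.2, hadj₂⟩)
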